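/- Let z, z' be elements of the imaginary cone Z of a Coxeter group W. Then ⟨z, z'⟩ ≤ 0. -/

import Mathlib

open scoped BigOperators

/-- Nonnegative conical span of a subset of a real vector space. -/
def nnCone {V : Type*} [AddCommGroup V] [Module ℝ V] (Γ : Set V) : Set V :=
  { v | ∃ (s : Finset V) (c : V → ℝ), ↑s ⊆ Γ ∧ (∀ x ∈ s, 0 ≤ c x) ∧ v = ∑ x ∈ s, c x • x }

/-- A based root system for a Coxeter system, in a real quadratic space. -/
structure BasedRootSystem (V : Type*) [AddCommGroup V] [Module ℝ V] where
  form : V →ₗ[ℝ] V →ₗ[ℝ] ℝ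
  form_symm : ∀ u v, form u v = form v u
  simples : Set V
  posIndep : ∀ s : Finset V, ↑s ⊆ simples → ∀ c : V → ℝ,
      (∀ v ∈ s, 0 < c v) → ∑ v ∈ s, c v • v = 0 → s = ∅
  norm_one : ∀ α ∈ simples, form α α = 1
  pairing : ∀ α ∈ simples, ∀ β ∈ simples, α ≠ β →
      (∃ m : ℕ, 2 ≤ m ∧ form α β = -Real.cos (Real.pi / (m : ℝ))) ∨ form α β ≤ -1

namespace BasedRootSystem

variable {V : Type*} [AddCommGroup V] [Module ℝ V]

/-- `g` is the reflection in the vector `α` (so `g v = v - ⟨v, α^∨⟩ α` with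
`α^∨ = (2/⟨α,α⟩)α`). -/
def IsRefl (R : BasedRootSystem V) (α : V) (g : V ≃ₗ[ℝ] V) : Prop :=
  ∀ v, g v = v - ((2 / R.form α α) * R.form v α) • α

/-- The Coxeter group `W`, generated by the simple reflections. -/
def W (R : BasedRootSystem V) : Subgroup (V ≃ₗ[ℝ] V) :=
  Subgroup.closure { g | ∃ α ∈ R.simples, R.IsRefl α g }

/-- The reflection subgroup generated by reflections in the elements of `Δ`. -/
def subW (R : BasedRootSystem V) (Δ : Set V) : Subgroup (V ≃ₗ[ℝ] V) :=
  Subgroup.closure { g | ∃ α ∈ Δ, R.IsRefl α g }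

/-- The root system `Φ = WΠ`. -/
def roots (R : BasedRootSystem V) : Set V :=
  { β | ∃ w ∈ R.W, ∃ α ∈ R.simples, β = w α }

/-- The positive roots `Φ⁺ = Φ ∩ ℝ_{≥0}Π`. -/
def posRoots (R : BasedRootSystem V) : Set V := R.roots ∩ nnCone R.simples

/-- The fundamental chamber `𝒞`. -/
def chamber (R : BasedRootSystem V) : Set V := { v | ∀ α ∈ R.simples, 0 ≤ R.form v α }

/-- `𝒦 = ℝ_{≥0}Π ∩ (−𝒞)`. -/
def K (R : BasedRootSystem V) : Set V :=
  nnCone R.simples ∩ { v | ∀ α ∈ R.simples, R.form v α ≤ 0 }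

/-- The imaginary cone `𝒵 = ⋃_{w ∈ W} w(𝒦)`. -/
def imaginaryCone (R : BasedRootSystem V) : Set V :=
  { v | ∃ w ∈ R.W, ∃ k ∈ R.K, v = w k }

/-- The standard length function of `(W,S)`. -/
noncomputable def length (R : BasedRootSystem V) (w : V ≃ₗ[ℝ] V) : ℕ :=
  sInf { n | ∃ l : List (V ≃ₗ[ℝ] V), l.length = n ∧
      (∀ g ∈ l, ∃ α ∈ R.simples, R.IsRefl α g) ∧ w = l.prod }

/-- Irreducibility of the Coxeter system: the Coxeter graph on `Π` is connected. -/
def Irred (R : BasedRootSystem V) : Prop :=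
  ∀ A B : Set V, A ∪ B = R.simples → (∀ a ∈ A, ∀ b ∈ B, R.form a b = 0) →
    A = ∅ ∨ B = ∅

/-- `Δ` is a support of `v`: `v` is a strictly positive combination of `Δ ⊆ Π`. -/
def IsSupport (R : BasedRootSystem V) (Δ : Finset V) (v : V) : Prop :=
  ↑Δ ⊆ R.simples ∧ ∃ c : V → ℝ, (∀ x ∈ Δ, 0 < c x) ∧ v = ∑ x ∈ Δ, c x • x

/-- `Δ` is connected in the Coxeter graph. -/
def ConnSubset (R : BasedRootSystem V) (Δ : Finset V) : Prop :=
  ∀ x ∈ Δ, ∀ y ∈ Δ, Relation.ReflTransGen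
    (fun a b => a ∈ Δ ∧ b ∈ Δ ∧ R.form a b ≠ 0) x y

end BasedRootSystem

/-!
Write `z = w k`, `z' = w' k'` with `k, k' ∈ 𝒦`. By `W`-invariance of the form it suffices to show
`⟨k, w k'⟩ ≤ 0` for `w ∈ W`. Since `k ∈ -𝒞` pairs nonpositively with every nonnegative combination
of simple roots, this follows from `⟨k, k'⟩ ≤ 0` and `w k' - k' ∈ ℝ_{≥0}Π`. The latter holds for
every `v ∈ -𝒞`, by induction on `ℓ(w)`: if `w = w' s_β` with `ℓ(w') < ℓ(w)`, then
`w v - v = (w' v - v) - 2⟨v, β⟩ w' β`, and `w' β` is a positive root because `ℓ(w' s_β) > ℓ(w')`.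

That `ℓ(w s_α) ≥ ℓ(w)` forces `w α ∈ ℝ_{≥0}Π` is Humphreys' argument (Reflection Groups and
Coxeter Groups, 5.4): factor `w = v u` with `u` in the dihedral subgroup generated by `s_α` and a
last letter `s_β` of `w`, and `v` of minimal length; then `v α, v β` are positive by induction and
`u α` is a nonnegative combination of `α, β`, computed with Chebyshev polynomials evaluated at
`-⟨α, β⟩`.
-/

section WordLength

variable {G : Type*} [Group G] {S I : Set G} {g h x : G}

-- Junk value `0` outside `Subgroup.closure S`.
noncomputable def wordLength (S : Set G) (g : G) : ℕ :=
  sInf {n | ∃ l : List G, (∀ y ∈ l, y ∈ S) ∧ l.length = n ∧ l.prod = g}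

theorem wordLength_prod_le {l : List G} (hl : ∀ y ∈ l, y ∈ S) :
    wordLength S l.prod ≤ l.length :=
  Nat.sInf_le ⟨l, hl, rfl, rfl⟩

theorem wordLength_one : wordLength S 1 = 0 :=
  Nat.le_zero.mp (wordLength_prod_le (l := []) (by simp))

theorem wordLength_le_one (hx : x ∈ S) : wordLength S x ≤ 1 := by
  simpa using wordLength_prod_le (l := [x]) (by simpa using hx)

theorem exists_reduced_word (hS : ∀ y ∈ S, y⁻¹ ∈ S) (hg : g ∈ Subgroup.closure S) :
    ∃ l : List G, (∀ y ∈ l, y ∈ S) ∧ l.length = wordLength S g ∧ l.prod = g := by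
  have hSS : S ∪ S⁻¹ = S := Set.union_eq_left.mpr fun y hy => by simpa using hS _ hy
  rw [← Subgroup.mem_toSubmonoid, Subgroup.closure_toSubmonoid, hSS] at hg
  obtain ⟨l, hl, rfl⟩ := Submonoid.exists_list_of_mem_closure hg
  exact Nat.sInf_mem
    (s := {n | ∃ l' : List G, (∀ y ∈ l', y ∈ S) ∧ l'.length = n ∧ l'.prod = l.prod})
    ⟨l.length, l, hl, rfl, rfl⟩

theorem eq_one_of_wordLength_eq_zero (hS : ∀ y ∈ S, y⁻¹ ∈ S) (hg : g ∈ Subgroup.closure S)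
    (h0 : wordLength S g = 0) : g = 1 := by
  obtain ⟨l, -, hlen, rfl⟩ := exists_reduced_word hS hg
  rw [List.eq_nil_of_length_eq_zero (hlen.trans h0), List.prod_nil]

theorem wordLength_mul_le (hS : ∀ y ∈ S, y⁻¹ ∈ S) (hg : g ∈ Subgroup.closure S)
    (hh : h ∈ Subgroup.closure S) : wordLength S (g * h) ≤ wordLength S g + wordLength S h := by
  obtain ⟨l, hl, hlen, rfl⟩ := exists_reduced_word hS hg
  obtain ⟨l', hl', hlen', rfl⟩ := exists_reduced_word hS hh
  rw [← hlen, ← hlen', ← List.length_append, ← List.prod_append]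
  exact wordLength_prod_le fun y hy => (List.mem_append.mp hy).elim (hl y) (hl' y)

theorem wordLength_le_of_subset (hIS : I ⊆ S) (hI : ∀ y ∈ I, y⁻¹ ∈ I)
    (hg : g ∈ Subgroup.closure I) : wordLength S g ≤ wordLength I g := by
  obtain ⟨l, hl, hlen, rfl⟩ := exists_reduced_word hI hg
  exact hlen ▸ wordLength_prod_le fun y hy => hIS (hl y hy)

theorem wordLength_mul_left_le_add_one (hS : ∀ y ∈ S, y⁻¹ ∈ S) (hg : g ∈ Subgroup.closure S)
    (hx : x ∈ S) : wordLength S (x * g) ≤ wordLength S g + 1 :=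
  (wordLength_mul_le hS (Subgroup.subset_closure hx) hg).trans
    (by have := wordLength_le_one hx; omega)

theorem exists_wordLength_mul_lt (hS : ∀ y ∈ S, y⁻¹ ∈ S) (hg : g ∈ Subgroup.closure S)
    (h0 : wordLength S g ≠ 0) : ∃ x ∈ S, wordLength S (g * x) < wordLength S g := by
  obtain ⟨l, hl, hlen, rfl⟩ := exists_reduced_word hS hg
  have hne : l ≠ [] := by rintro rfl; simp_all
  obtain ⟨l', y, rfl⟩ : ∃ l' y, l = l' ++ [y] :=
    ⟨l.dropLast, l.getLast hne, (List.dropLast_append_getLast hne).symm⟩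
  refine ⟨y⁻¹, hS y (hl y (by simp)), ?_⟩
  rw [← hlen, List.prod_append, List.prod_singleton, mul_inv_cancel_right]
  calc wordLength S l'.prod ≤ l'.length := wordLength_prod_le fun z hz => hl z (by simp [hz])
    _ < (l' ++ [y]).length := by simp

theorem exists_wordLength_mul_left_lt (hS : ∀ y ∈ S, y⁻¹ ∈ S) (hg : g ∈ Subgroup.closure S)
    (h0 : wordLength S g ≠ 0) : ∃ x ∈ S, wordLength S (x * g) < wordLength S g := by
  obtain ⟨l, hl, hlen, rfl⟩ := exists_reduced_word hS hg
  obtain ⟨y, l', rfl⟩ := List.exists_cons_of_ne_nil (l := l) (by rintro rfl; simp_all)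
  refine ⟨y⁻¹, hS y (hl y (by simp)), ?_⟩
  rw [← hlen, List.prod_cons, inv_mul_cancel_left]
  calc wordLength S l'.prod ≤ l'.length := wordLength_prod_le fun z hz => hl z (by simp [hz])
    _ < (y :: l').length := by simp

theorem exists_parabolic_factorization (hIS : I ⊆ S) (hI : ∀ y ∈ I, y⁻¹ ∈ I)
    (hg : g ∈ Subgroup.closure S) :
    ∃ v u, v * u = g ∧ v ∈ Subgroup.closure S ∧ u ∈ Subgroup.closure I ∧
      wordLength S v + wordLength I u ≤ wordLength S g ∧
      ∀ x ∈ I, wordLength S v ≤ wordLength S (v * x) := by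
  classical
  have hex : ∃ n, ∃ v u, v * u = g ∧ v ∈ Subgroup.closure S ∧ u ∈ Subgroup.closure I ∧
      wordLength S v + wordLength I u ≤ wordLength S g ∧ wordLength S v = n :=
    ⟨_, g, 1, mul_one g, hg, one_mem _, by rw [wordLength_one, add_zero], rfl⟩
  obtain ⟨v, u, rfl, hv, hu, hlen, hn⟩ := Nat.find_spec hex
  refine ⟨v, u, rfl, hv, hu, hlen, fun x hx => not_lt.mp fun hlt => ?_⟩
  have hxu : wordLength I (x⁻¹ * u) ≤ wordLength I u + 1 :=
    wordLength_mul_left_le_add_one hI hu (hI x hx)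
  have := Nat.find_min' hex ⟨v * x, x⁻¹ * u, by group,
    mul_mem hv (Subgroup.subset_closure (hIS hx)), mul_mem (Subgroup.subset_closure (hI x hx)) hu,
    by omega, rfl⟩
  omega

end WordLength

section Chebyshev

open Polynomial.Chebyshev Real

theorem chebyshevU_eval_nonneg_of_one_le {a : ℝ} (ha : 1 ≤ a) {n : ℤ} (hn : -1 ≤ n) :
    0 ≤ (U ℝ n).eval a := by
  have hmono : ∀ k : ℕ, 0 ≤ (U ℝ ((k : ℤ) - 1)).eval a ∧
      (U ℝ ((k : ℤ) - 1)).eval a ≤ (U ℝ k).eval a := by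
    intro k
    induction k with
    | zero => simp
    | succ k ih =>
      have hrec : (U ℝ ((k : ℤ) + 1)).eval a =
          2 * a * (U ℝ k).eval a - (U ℝ ((k : ℤ) - 1)).eval a := by
        simp [U_add_one]
      push_cast
      rw [add_sub_cancel_right, hrec]
      constructor <;> nlinarith
  obtain ⟨k, hk⟩ := Int.eq_ofNat_of_zero_le (show 0 ≤ n + 1 by omega)
  simpa [show n = (k : ℤ) - 1 by omega] using (hmono k).1

theorem sin_pi_div_pos {m : ℕ} (hm : 2 ≤ m) : 0 < sin (π / m) := by
  have hm' : (2 : ℝ) ≤ m := by exact_mod_cast hm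
  apply sin_pos_of_pos_of_lt_pi (by positivity)
  rw [div_lt_iff₀ (by positivity)]
  nlinarith [pi_pos]

theorem chebyshevU_eval_cos_pi_div_nonneg {m : ℕ} (hm : 2 ≤ m) {n : ℤ} (h1 : -1 ≤ n)
    (h2 : n < m) : 0 ≤ (U ℝ n).eval (cos (π / m)) := by
  refine nonneg_of_mul_nonneg_left ?_ (sin_pi_div_pos hm)
  rw [U_real_cos]
  have hm' : (0 : ℝ) < m := by positivity
  have hn1 : (0 : ℝ) ≤ n + 1 := by exact_mod_cast (show (0 : ℤ) ≤ n + 1 by omega)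
  have hn2 : (n : ℝ) + 1 ≤ m := by exact_mod_cast (show n + 1 ≤ m by omega)
  apply sin_nonneg_of_nonneg_of_le_pi (by positivity)
  calc ((n : ℝ) + 1) * (π / m) ≤ m * (π / m) := by gcongr
    _ = π := by field_simp

theorem chebyshevU_eval_cos_pi_div_sub_one {m : ℕ} (hm : 2 ≤ m) :
    (U ℝ ((m : ℤ) - 1)).eval (cos (π / m)) = 0 := by
  have h := U_real_cos (π / m) ((m : ℤ) - 1)
  have hm' : (m : ℝ) ≠ 0 := by positivity
  rw [show (((m : ℤ) - 1 : ℤ) : ℝ) + 1 = m by push_cast; ring, mul_div_cancel₀ _ hm', sin_pi] at h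
  exact (mul_eq_zero.mp h).resolve_right (sin_pi_div_pos hm).ne'

theorem chebyshevU_eval_cos_pi_div_sub_two {m : ℕ} (hm : 2 ≤ m) :
    (U ℝ ((m : ℤ) - 2)).eval (cos (π / m)) = 1 := by
  have h := U_real_cos (π / m) ((m : ℤ) - 2)
  have hm' : (m : ℝ) ≠ 0 := by positivity
  rw [show ((((m : ℤ) - 2 : ℤ) : ℝ) + 1) * (π / m) = π - π / m by push_cast; field_simp; ring,
    sin_pi_sub] at h
  exact (mul_eq_right₀ (sin_pi_div_pos hm).ne').mp h

end Chebyshev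

theorem nnCone_subset_hull {V : Type*} [AddCommGroup V] [Module ℝ V] (Γ : Set V) :
    nnCone Γ ⊆ PointedCone.hull ℝ Γ := by
  rintro _ ⟨s, c, hs, hc, rfl⟩
  exact Submodule.sum_mem _ fun x hx =>
    PointedCone.smul_mem _ (hc x hx) (PointedCone.subset_hull (hs hx))

namespace BasedRootSystem

open Polynomial.Chebyshev Real

variable {V : Type*} [AddCommGroup V] [Module ℝ V] (R : BasedRootSystem V)

noncomputable def sref {α : V} (hα : α ∈ R.simples) : V ≃ₗ[ℝ] V :=
  Module.reflection (x := α) (f := (2 : ℝ) • R.form α) (by simp [R.norm_one α hα])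

theorem sref_apply {α : V} (hα : α ∈ R.simples) (v : V) :
    R.sref hα v = v - (2 * R.form v α) • α := by
  rw [sref, Module.reflection_apply, LinearMap.smul_apply, R.form_symm, smul_eq_mul]

theorem sref_inv {α : V} (hα : α ∈ R.simples) : (R.sref hα)⁻¹ = R.sref hα := rfl

theorem sref_mul_self {α : V} (hα : α ∈ R.simples) : R.sref hα * R.sref hα = 1 := by
  rw [← inv_eq_iff_mul_eq_one, sref_inv]

theorem isRefl_iff {α : V} (hα : α ∈ R.simples) {g : V ≃ₗ[ℝ] V} :
    R.IsRefl α g ↔ g = R.sref hα := by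
  simp only [IsRefl, R.norm_one α hα, LinearEquiv.ext_iff, sref_apply]
  norm_num

def simpleReflections : Set (V ≃ₗ[ℝ] V) := {g | ∃ α ∈ R.simples, R.IsRefl α g}

theorem sref_mem_simpleReflections {α : V} (hα : α ∈ R.simples) :
    R.sref hα ∈ R.simpleReflections :=
  ⟨α, hα, (R.isRefl_iff hα).mpr rfl⟩

theorem inv_mem_simpleReflections :
    ∀ g ∈ R.simpleReflections, g⁻¹ ∈ R.simpleReflections := by
  rintro g ⟨α, hα, hg⟩
  rw [(R.isRefl_iff hα).mp hg, sref_inv]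
  exact R.sref_mem_simpleReflections hα

theorem form_apply_apply {w : V ≃ₗ[ℝ] V} (hw : w ∈ R.W) (u v : V) :
    R.form (w u) (w v) = R.form u v := by
  induction hw using Subgroup.closure_induction generalizing u v with
  | mem g hg =>
    obtain ⟨α, hα, hg⟩ := hg
    rw [(R.isRefl_iff hα).mp hg, sref_apply, sref_apply]
    simp only [map_sub, map_smul, LinearMap.sub_apply, LinearMap.smul_apply, smul_eq_mul,
      R.norm_one α hα, R.form_symm α v]
    ring
  | one => rfl
  | mul g h _ _ hg hh => rw [LinearEquiv.mul_apply, LinearEquiv.mul_apply, hg, hh]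
  | inv g _ hg => simpa using (hg (g⁻¹ u) (g⁻¹ v)).symm

theorem mul_sref_eq_sref_mul {w : V ≃ₗ[ℝ] V} (hw : w ∈ R.W) {α β : V} (hα : α ∈ R.simples)
    (hβ : β ∈ R.simples) (h : w α = β) : w * R.sref hα = R.sref hβ * w := by
  ext v
  simp only [LinearEquiv.mul_apply, sref_apply, map_sub, map_smul, ← h, R.form_apply_apply hw]

abbrev posCone : PointedCone ℝ V := PointedCone.hull ℝ R.simples

theorem form_nonpos_of_mem_posCone {k x : V} (hk : ∀ α ∈ R.simples, R.form k α ≤ 0)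
    (hx : x ∈ R.posCone) : R.form k x ≤ 0 := by
  have hle : R.posCone ≤ (PointedCone.positive ℝ ℝ).comap (-R.form k) :=
    Submodule.span_le.mpr fun α hα => by
      simpa [PointedCone.mem_positive] using hk α hα
  simpa [PointedCone.mem_positive] using hle hx

theorem pair_inv_mem {α β : V} (hα : α ∈ R.simples) (hβ : β ∈ R.simples) :
    ∀ g ∈ ({R.sref hα, R.sref hβ} : Set (V ≃ₗ[ℝ] V)), g⁻¹ ∈ ({R.sref hα, R.sref hβ} : Set _) := by
  rintro g (rfl | rfl) <;> simp [sref_inv]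

theorem pair_subset_simpleReflections {α β : V} (hα : α ∈ R.simples) (hβ : β ∈ R.simples) :
    {R.sref hα, R.sref hβ} ⊆ R.simpleReflections :=
  Set.pair_subset (R.sref_mem_simpleReflections hα) (R.sref_mem_simpleReflections hβ)

/-- The image of `α` or `β` (according to the parity of `n`) under the alternating word
`s_α s_β s_α ⋯` of length `n`; its coefficients are Chebyshev values at `-⟨α, β⟩`. -/
noncomputable def dihedralRoot (α β : V) (n : ℕ) : V :=
  (U ℝ n).eval (-R.form α β) • α + (U ℝ ((n : ℤ) - 1)).eval (-R.form α β) • β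

theorem dihedralRoot_zero (α β : V) : R.dihedralRoot α β 0 = α := by
  simp [dihedralRoot]

theorem sref_dihedralRoot {α : V} (hα : α ∈ R.simples) (β : V) (n : ℕ) :
    R.sref hα (R.dihedralRoot β α n) = R.dihedralRoot α β (n + 1) := by
  have hrec : (U ℝ ((n : ℤ) + 1)).eval (-R.form α β) =
      2 * -R.form α β * (U ℝ n).eval (-R.form α β) - (U ℝ ((n : ℤ) - 1)).eval (-R.form α β) := by
    simp [U_add_one]
  simp only [dihedralRoot, sref_apply, map_add, map_smul, R.norm_one α hα, R.form_symm β α]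
  push_cast
  rw [add_sub_cancel_right, hrec]
  module

theorem dihedralRoot_of_form_eq_neg_cos {α β : V} {m : ℕ} (hm : 2 ≤ m)
    (h : R.form α β = -cos (π / m)) : R.dihedralRoot α β (m - 1) = β := by
  have hcast : ((m - 1 : ℕ) : ℤ) = (m : ℤ) - 1 := by omega
  simp only [dihedralRoot, h, neg_neg, hcast, sub_sub, chebyshevU_eval_cos_pi_div_sub_one hm,
    show (1 : ℤ) + 1 = 2 by rfl, chebyshevU_eval_cos_pi_div_sub_two hm, zero_smul, one_smul,
    zero_add]

theorem dihedralRoot_mem_hull {α β : V} (hα : α ∈ R.simples) (hβ : β ∈ R.simples) (hαβ : α ≠ β)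
    {n : ℕ} (hn : ∀ m : ℕ, 2 ≤ m → R.form α β = -cos (π / m) → n < m) :
    R.dihedralRoot α β n ∈ PointedCone.hull ℝ {α, β} := by
  have hU : ∀ k : ℤ, -1 ≤ k → k ≤ n → 0 ≤ (U ℝ k).eval (-R.form α β) := by
    intro k hk1 hkn
    rcases R.pairing α hα β hβ hαβ with ⟨m, hm, hcos⟩ | hle
    · rw [hcos, neg_neg]
      exact chebyshevU_eval_cos_pi_div_nonneg hm hk1 (by have := hn m hm hcos; omega)
    · exact chebyshevU_eval_nonneg_of_one_le (by linarith) hk1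
  exact add_mem
    (PointedCone.smul_mem _ (hU n (by omega) le_rfl) (PointedCone.subset_hull (by simp)))
    (PointedCone.smul_mem _ (hU _ (by omega) (by omega)) (PointedCone.subset_hull (by simp)))

theorem sref_mul_mul_sref_of_apply_eq {u : V ≃ₗ[ℝ] V} (hu : u ∈ R.W) {α x : V}
    (hα : α ∈ R.simples) (hx : x ∈ R.simples) (h : u α = x) :
    R.sref hx * u * R.sref hα = u := by
  rw [mul_assoc, R.mul_sref_eq_sref_mul hu hα hx h, ← mul_assoc, sref_mul_self, one_mul]

/-- With `s_x` a left descent and `s_α` not a right descent, a reduced word for `u` alternates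
starting from `s_x`, so `u α` is the corresponding dihedral root. Its length stays below the order
`m` of `s_x s_y`: the dihedral root of length `m - 1` is `x` itself, which would make `s_α` a right
descent. -/
theorem apply_eq_dihedralRoot {x y α : V} (hx : x ∈ R.simples) (hy : y ∈ R.simples)
    (hα : α ∈ R.simples) (hαxy : α = x ∨ α = y) (j : ℕ) {u : V ≃ₗ[ℝ] V}
    (hu : u ∈ Subgroup.closure {R.sref hx, R.sref hy})
    (hlen : wordLength {R.sref hx, R.sref hy} u = j)
    (hasc : j ≤ wordLength {R.sref hx, R.sref hy} (u * R.sref hα))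
    (hdesc : wordLength {R.sref hx, R.sref hy} (R.sref hx * u) < j) :
    u α = R.dihedralRoot x y j ∧ ∀ m : ℕ, 2 ≤ m → R.form x y = -cos (π / m) → j < m := by
  induction j generalizing x y u with
  | zero => omega
  | succ j ih =>
    have hTinv := R.pair_inv_mem hx hy
    have hTW := R.pair_subset_simpleReflections hx hy
    have hxT : R.sref hx ∈ ({R.sref hx, R.sref hy} : Set _) := Set.mem_insert _ _
    have hαT : R.sref hα ∈ ({R.sref hx, R.sref hy} : Set _) := by
      rcases hαxy with rfl | rfl <;> simp
    have hTcomm : ({R.sref hy, R.sref hx} : Set _) = {R.sref hx, R.sref hy} := Set.pair_comm _ _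
    have hsxx : ∀ g, R.sref hx * (R.sref hx * g) = g := fun g => by
      rw [← mul_assoc, sref_mul_self, one_mul]
    obtain ⟨u', rfl⟩ : ∃ u', u = R.sref hx * u' := ⟨R.sref hx * u, (hsxx u).symm⟩
    rw [hsxx] at hdesc
    generalize hT : ({R.sref hx, R.sref hy} : Set (V ≃ₗ[ℝ] V)) = T at *
    have hu' : u' ∈ Subgroup.closure T := by
      simpa [hsxx] using mul_mem (Subgroup.subset_closure hxT) hu
    have hlen' : wordLength T u' = j := by
      have := wordLength_mul_left_le_add_one hTinv hu' hxT
      omega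
    have hasc' : j ≤ wordLength T (u' * R.sref hα) := by
      have := wordLength_mul_left_le_add_one hTinv
        (mul_mem hu' (Subgroup.subset_closure hαT)) hxT
      rw [← mul_assoc] at this
      omega
    have hfix : u' α ≠ x := fun h => by
      rw [R.sref_mul_mul_sref_of_apply_eq (Subgroup.closure_mono hTW hu') hα hx h] at hasc
      omega
    have hprev : u' α = R.dihedralRoot y x j ∧
        ∀ m : ℕ, 2 ≤ m → R.form x y = -cos (π / m) → j < m := by
      rcases j with _ | j
      · have h1 : u' = 1 := eq_one_of_wordLength_eq_zero hTinv hu' hlen'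
        have hαy : α = y := hαxy.resolve_left fun h => hfix (by rw [h1, h]; rfl)
        exact ⟨by rw [h1, hαy, dihedralRoot_zero]; rfl, fun m hm _ => by omega⟩
      · obtain ⟨z, hzT, hz⟩ := exists_wordLength_mul_left_lt hTinv hu' (by omega)
        rw [← hT] at hzT
        rcases hzT with rfl | rfl
        · omega
        · obtain ⟨h1, h2⟩ := ih hy hx hαxy.symm (by rwa [hTcomm]) (by rwa [hTcomm])
            (by rwa [hTcomm]) (by rw [hTcomm]; omega)
          exact ⟨h1, fun m hm hcos => h2 m hm (by rwa [R.form_symm])⟩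
    obtain ⟨hroot, hbound⟩ := hprev
    refine ⟨?_, fun m hm hcos => ?_⟩
    · rw [LinearEquiv.mul_apply, hroot, sref_dihedralRoot]
    · have hjm := hbound m hm hcos
      refine lt_of_le_of_ne hjm fun hjm' => hfix ?_
      rw [hroot, show j = m - 1 by omega]
      exact R.dihedralRoot_of_form_eq_neg_cos hm (by rwa [R.form_symm])

theorem apply_mem_hull_of_dihedral {α β : V} (hα : α ∈ R.simples) (hβ : β ∈ R.simples)
    (hαβ : α ≠ β) {u : V ≃ₗ[ℝ] V} (hu : u ∈ Subgroup.closure {R.sref hα, R.sref hβ})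
    (hasc : wordLength {R.sref hα, R.sref hβ} u ≤
      wordLength {R.sref hα, R.sref hβ} (u * R.sref hα)) :
    u α ∈ PointedCone.hull ℝ {α, β} := by
  have hTinv := R.pair_inv_mem hα hβ
  rcases Nat.eq_zero_or_pos (wordLength {R.sref hα, R.sref hβ} u) with h0 | hpos
  · rw [eq_one_of_wordLength_eq_zero hTinv hu h0]
    exact PointedCone.subset_hull (Set.mem_insert _ _)
  obtain ⟨z, hzT, hz⟩ := exists_wordLength_mul_left_lt hTinv hu hpos.ne'
  rcases hzT with rfl | rfl
  · obtain ⟨hroot, hbound⟩ := R.apply_eq_dihedralRoot hα hβ hα (Or.inl rfl) _ hu rfl hasc hz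
    rw [hroot]
    exact R.dihedralRoot_mem_hull hα hβ hαβ hbound
  · have hTcomm : ({R.sref hβ, R.sref hα} : Set _) = {R.sref hα, R.sref hβ} :=
      Set.pair_comm _ _
    obtain ⟨hroot, hbound⟩ := R.apply_eq_dihedralRoot hβ hα hα (Or.inr rfl) _
      (by rwa [hTcomm]) (by rw [hTcomm]) (by rwa [hTcomm]) (by rwa [hTcomm])
    rw [hroot, Set.pair_comm]
    exact R.dihedralRoot_mem_hull hβ hα hαβ.symm hbound

theorem apply_mem_posCone {w : V ≃ₗ[ℝ] V} (hw : w ∈ R.W) {α : V} (hα : α ∈ R.simples)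
    (hasc : wordLength R.simpleReflections w ≤ wordLength R.simpleReflections (w * R.sref hα)) :
    w α ∈ R.posCone := by
  have hSinv := R.inv_mem_simpleReflections
  induction hn : wordLength R.simpleReflections w using Nat.strong_induction_on
    generalizing w α with
  | _ n ih =>
  rcases Nat.eq_zero_or_pos n with rfl | hpos
  · rw [eq_one_of_wordLength_eq_zero hSinv hw hn]
    exact PointedCone.subset_hull hα
  obtain ⟨t, ⟨β, hβ, ht⟩, hdesc⟩ := exists_wordLength_mul_lt hSinv hw (by omega)
  rw [(R.isRefl_iff hβ).mp ht] at hdesc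
  have hαβ : α ≠ β := by rintro rfl; omega
  have hTS := R.pair_subset_simpleReflections hα hβ
  have hTinv := R.pair_inv_mem hα hβ
  have hαT : R.sref hα ∈ ({R.sref hα, R.sref hβ} : Set _) := Set.mem_insert _ _
  have hβT : R.sref hβ ∈ ({R.sref hα, R.sref hβ} : Set _) := Set.mem_insert_of_mem _ rfl
  obtain ⟨v, u, rfl, hv, hu, hlen, hvasc⟩ := exists_parabolic_factorization hTS hTinv hw
  have hvlt : wordLength R.simpleReflections v < n := by
    by_contra! hge
    obtain rfl : u = 1 := eq_one_of_wordLength_eq_zero hTinv hu (by omega)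
    rw [mul_one] at hdesc hn
    have := hvasc _ hβT
    omega
  have hvα := ih _ hvlt hv hα (hvasc _ hαT) rfl
  have hvβ := ih _ hvlt hv hβ (hvasc _ hβT) rfl
  have huasc : wordLength {R.sref hα, R.sref hβ} u ≤
      wordLength {R.sref hα, R.sref hβ} (u * R.sref hα) := by
    by_contra! hlt
    have husα := mul_mem hu (Subgroup.subset_closure hαT)
    have h1 := wordLength_mul_le hSinv hv (Subgroup.closure_mono hTS husα)
    have h2 := wordLength_le_of_subset hTS hTinv husα
    rw [mul_assoc] at hasc
    omega
  have hcone : PointedCone.hull ℝ {α, β} ≤ R.posCone.comap (v : V →ₗ[ℝ] V) :=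
    Submodule.span_le.mpr (Set.pair_subset hvα hvβ)
  exact hcone (R.apply_mem_hull_of_dihedral hα hβ hαβ hu huasc)

theorem apply_sub_self_mem_posCone {w : V ≃ₗ[ℝ] V} (hw : w ∈ R.W) {v : V}
    (hv : ∀ α ∈ R.simples, R.form v α ≤ 0) : w v - v ∈ R.posCone := by
  have hSinv := R.inv_mem_simpleReflections
  induction hn : wordLength R.simpleReflections w using Nat.strong_induction_on
    generalizing w with
  | _ n ih =>
  rcases Nat.eq_zero_or_pos n with rfl | hpos
  · simp [eq_one_of_wordLength_eq_zero hSinv hw hn]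
  obtain ⟨t, ⟨β, hβ, ht⟩, hdesc⟩ := exists_wordLength_mul_lt hSinv hw (by omega)
  rw [(R.isRefl_iff hβ).mp ht] at hdesc
  have hw' : w * R.sref hβ ∈ R.W :=
    mul_mem hw (Subgroup.subset_closure (R.sref_mem_simpleReflections hβ))
  have hroot : (w * R.sref hβ) β ∈ R.posCone :=
    R.apply_mem_posCone hw' hβ (by rw [mul_assoc, sref_mul_self, mul_one]; omega)
  have hdecomp : w v - v = ((w * R.sref hβ) v - v) + (-2 * R.form v β) • (w * R.sref hβ) β := by
    simp only [LinearEquiv.mul_apply, sref_apply, map_sub, map_smul, R.norm_one β hβ]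
    module
  rw [hdecomp]
  exact add_mem (ih _ (by omega) hw' rfl) (PointedCone.smul_mem _ (by linarith [hv β hβ]) hroot)

end BasedRootSystem

/-- for `z, z'` in the imaginary cone `𝒵`, `⟨z, z'⟩ ≤ 0`. -/
theorem statement11 {V : Type*} [AddCommGroup V] [Module ℝ V]
    (R : BasedRootSystem V) (z z' : V)
    (hz : z ∈ R.imaginaryCone) (hz' : z' ∈ R.imaginaryCone) :
    R.form z z' ≤ 0 := by
  obtain ⟨w, hw, k, hk, rfl⟩ := hz
  obtain ⟨w', hw', k', hk', rfl⟩ := hz'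
  have hk'_cone : k' ∈ R.posCone := nnCone_subset_hull _ hk'.1
  have hmove : (w⁻¹ * w') k' - k' ∈ R.posCone :=
    R.apply_sub_self_mem_posCone (mul_mem (inv_mem hw) hw') hk'.2
  calc R.form (w k) (w' k') = R.form k ((w⁻¹ * w') k') := by
        rw [← R.form_apply_apply (inv_mem hw)]
        simp
    _ = R.form k k' + R.form k ((w⁻¹ * w') k' - k') := by rw [map_sub]; ring
    _ ≤ 0 := add_nonpos (R.form_nonpos_of_mem_posCone hk.2 hk'_cone)
        (R.form_nonpos_of_mem_posCone hk.2 hmove)
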